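/- arXiv:2204.03927 — 7 statements merged into one kernel-verified Lean document; each statement's English description precedes it below -/
import Mathlib

section
/- Every symmetric positive definite symplectic 2n×2n real matrix A has a spectral decomposition A = Q · diag(D, D⁻¹) · Qᵀ, where Q is a 2n×2n orthogonal symplectic matrix, D = diag(d₁, …, dₙ) is a diagonal n×n matrix with d₁ ≥ d₂ ≥ … ≥ dₙ ≥ 1, and diag(D, D⁻¹) denotes the block diagonal matrix with blocks D and D⁻¹. -/
/-!
Let `J` be the complex structure `x ↦ symplJ n * x` on Euclidean space, and view `A` as a
positive operator with `A J A = J`. Take a unit eigenvector `u` of `A` for its largest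
eigenvalue `μ`. Then `J u` is an eigenvector for `μ⁻¹ ≤ μ`, which forces `μ ≥ 1`, and the
plane spanned by `u` and `J u` is invariant under `A` and `J`, hence so is its orthogonal
complement. Induction on the dimension yields an orthonormal family `v` of eigenvectors with
`⟪vᵢ, J vⱼ⟫ = 0`, and the columns `vᵢ`, `-J vᵢ` form the orthogonal symplectic matrix `Q`.
-/

open Matrix

/-- The standard symplectic matrix `J = [[0, I], [-I, 0]]`. -/
noncomputable def symplJ (n : ℕ) : Matrix (Fin n ⊕ Fin n) (Fin n ⊕ Fin n) ℝ :=
  Matrix.fromBlocks 0 1 (-1) 0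

open Module Module.End RealInnerProductSpace

theorem Fin.antitone_cons {α : Type*} [Preorder α] {n : ℕ} {a : α} {f : Fin n → α}
    (hf : Antitone f) (ha : ∀ i, f i ≤ a) : Antitone (Fin.cons a f : Fin (n + 1) → α) := by
  intro i j hij
  cases i using Fin.cases <;> cases j using Fin.cases
  · exact le_rfl
  · exact ha _
  · exact absurd hij (Fin.succ_pos _).not_ge
  · exact hf (Fin.succ_le_succ_iff.1 hij)

theorem Module.End.span_pair_mem_invtSubmodule {R M : Type*} [Semiring R] [AddCommMonoid M]
    [Module R M] {f : Module.End R M} {u w : M}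
    (hu : f u ∈ Submodule.span R (Set.range ![u, w]))
    (hw : f w ∈ Submodule.span R (Set.range ![u, w])) :
    Submodule.span R (Set.range ![u, w]) ∈ f.invtSubmodule :=
  (mem_invtSubmodule_iff_map_le f).2 <| (Submodule.map_span_le _ _ _).2 <|
    Set.forall_mem_range.2 <| Fin.forall_fin_two.2 ⟨hu, hw⟩

section InnerProductSpace

variable {𝕜 E : Type*} [RCLike 𝕜] [NormedAddCommGroup E] [InnerProductSpace 𝕜 E]

theorem Orthonormal.fin_cons {n : ℕ} {u : E} {v : Fin n → E} (hv : Orthonormal 𝕜 v)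
    (hu : ‖u‖ = 1) (huv : ∀ i, inner 𝕜 u (v i) = 0) :
    Orthonormal 𝕜 (Fin.cons u v : Fin (n + 1) → E) := by
  refine ⟨Fin.cases hu hv.1, fun i j hij => ?_⟩
  cases i using Fin.cases <;> cases j using Fin.cases
  · exact absurd rfl hij
  · exact huv _
  · exact inner_eq_zero_symm.1 (huv _)
  · exact hv.2 fun h => hij (congrArg Fin.succ h)

theorem LinearMap.IsPositive.restrict {T : Module.End 𝕜 E} (hT : T.IsPositive)
    {K : Submodule 𝕜 E} (hK : K ∈ T.invtSubmodule) : (T.restrict hK).IsPositive :=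
  ⟨hT.isSymmetric.restrict_invariant hK, fun x => hT.2 x⟩

end InnerProductSpace

variable {E : Type*} [NormedAddCommGroup E] [InnerProductSpace ℝ E]

theorem LinearMap.IsSymmetric.exists_unit_eigenvector_max [FiniteDimensional ℝ E]
    {T : Module.End ℝ E} (hT : T.IsSymmetric) {n : ℕ} (hn : finrank ℝ E = n + 1) :
    ∃ (μ : ℝ) (u : E), ‖u‖ = 1 ∧ T u = μ • u ∧ ∀ ν, HasEigenvalue T ν → ν ≤ μ := by
  refine ⟨hT.eigenvalues hn 0, hT.eigenvectorBasis hn 0, (hT.eigenvectorBasis hn).orthonormal.1 0,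
    by simp, fun ν hν => ?_⟩
  obtain ⟨i, rfl⟩ := hT.exists_eigenvalues_eq hn hν
  exact hT.eigenvalues_antitone hn (Fin.zero_le i)

structure IsOrthogonalComplexStructure (J : Module.End ℝ E) : Prop where
  inner_map_left : ∀ x y, ⟪J x, y⟫ = -⟪x, J y⟫
  map_map : ∀ x, J (J x) = -x

namespace IsOrthogonalComplexStructure

variable {J : Module.End ℝ E} (hJ : IsOrthogonalComplexStructure J)
include hJ

theorem inner_map_right (x y : E) : ⟪x, J y⟫ = -⟪J x, y⟫ := by
  rw [hJ.inner_map_left, neg_neg]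

theorem inner_self_map (x : E) : ⟪x, J x⟫ = 0 := by
  have := hJ.inner_map_left x x
  rw [real_inner_comm] at this
  linarith

theorem inner_map_map (x y : E) : ⟪J x, J y⟫ = ⟪x, y⟫ := by
  rw [hJ.inner_map_left, hJ.map_map, inner_neg_right, neg_neg]

theorem norm_map (x : E) : ‖J x‖ = ‖x‖ := by
  rw [norm_eq_sqrt_real_inner, norm_eq_sqrt_real_inner, hJ.inner_map_map]

theorem orthogonal_mem_invtSubmodule {W : Submodule ℝ E} (hW : W ∈ J.invtSubmodule) :
    Wᗮ ∈ J.invtSubmodule := fun x hx y hy => by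
  rw [hJ.inner_map_right, hx (J y) (hW hy), neg_zero]

theorem restrict {K : Submodule ℝ E} (hK : K ∈ J.invtSubmodule) :
    IsOrthogonalComplexStructure (J.restrict hK) where
  inner_map_left x y := hJ.inner_map_left x y
  map_map x := Subtype.ext (hJ.map_map x)

theorem orthonormal_pair {u : E} (hu : ‖u‖ = 1) : Orthonormal ℝ ![u, J u] := by
  rw [orthonormal_iff_ite]
  simp [Fin.forall_fin_two, hJ.inner_self_map, real_inner_comm u, hu, hJ.norm_map]

theorem orthonormal_sumElim {ι : Type*} {v : ι → E} (hv : Orthonormal ℝ v)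
    (hvJ : ∀ i j, ⟪v i, J (v j)⟫ = 0) : Orthonormal ℝ (Sum.elim v fun i => -J (v i)) := by
  classical
  rw [orthonormal_iff_ite] at hv ⊢
  rintro (i | i) (j | j)
  · simpa using hv i j
  · simp [hvJ]
  · simp [← hJ.inner_map_right, hvJ]
  · simpa [hJ.inner_map_map] using hv i j

end IsOrthogonalComplexStructure

section Symplectic

variable {J T : Module.End ℝ E}

theorem apply_map_eq_inv_smul_of_mul_mul_eq (hTJ : T * J * T = J) {μ : ℝ} {v : E}
    (hv : T v = μ • v) : T (J v) = μ⁻¹ • J v := by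
  have h : J v = μ • T (J v) := by
    rw [← map_smul, ← map_smul, ← hv]
    exact congr($hTJ v).symm
  rcases eq_or_ne μ 0 with rfl | hμ
  · rw [zero_smul] at h
    rw [h, map_zero, smul_zero]
  · exact (eq_inv_smul_iff₀ hμ).2 h.symm

theorem injective_of_mul_mul_eq (hJ : IsOrthogonalComplexStructure J) (hTJ : T * J * T = J) :
    Function.Injective T := by
  refine (injective_iff_map_eq_zero T).2 fun x hx => ?_
  have hJx : J x = 0 := by rw [← congr($hTJ x)]; simp [hx]
  calc x = -J (J x) := by rw [hJ.map_map, neg_neg]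
    _ = 0 := by rw [hJx, map_zero, neg_zero]

theorem exists_unit_eigenvector_max_of_mul_mul_eq [FiniteDimensional ℝ E]
    (hJ : IsOrthogonalComplexStructure J) (hT : T.IsPositive) (hTJ : T * J * T = J) {n : ℕ}
    (hn : finrank ℝ E = n + 1) :
    ∃ (μ : ℝ) (u : E), ‖u‖ = 1 ∧ T u = μ • u ∧ 1 ≤ μ ∧ ∀ ν, HasEigenvalue T ν → ν ≤ μ := by
  obtain ⟨μ, u, hu, hTu, hmax⟩ := hT.isSymmetric.exists_unit_eigenvector_max hn
  have hu0 : u ≠ 0 := norm_ne_zero_iff.1 (by rw [hu]; exact one_ne_zero)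
  have hμ : 0 < μ := by
    have hnonneg : 0 ≤ μ := by
      simpa [hTu, real_inner_smul_left, hu] using hT.2 u
    refine hnonneg.lt_of_ne fun h => hu0 (injective_of_mul_mul_eq hJ hTJ ?_)
    rw [hTu, ← h, zero_smul, map_zero]
  have hJu : HasEigenvector T μ⁻¹ (J u) :=
    ⟨mem_eigenspace_iff.2 (apply_map_eq_inv_smul_of_mul_mul_eq hTJ hTu),
      fun h => hu0 (by rw [← norm_eq_zero, ← hJ.norm_map, h, norm_zero])⟩
  have hμinv : μ⁻¹ ≤ μ := hmax _ (hasEigenvalue_of_hasEigenvector hJu)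
  refine ⟨μ, u, hu, hTu, ?_, hmax⟩
  nlinarith [inv_mul_cancel₀ hμ.ne']

theorem exists_orthonormal_isotropic_eigenvectors [FiniteDimensional ℝ E]
    (hJ : IsOrthogonalComplexStructure J) (hT : T.IsPositive) (hTJ : T * J * T = J) {n : ℕ}
    (hn : finrank ℝ E = 2 * n) :
    ∃ (d : Fin n → ℝ) (v : Fin n → E), Orthonormal ℝ v ∧ (∀ i j, ⟪v i, J (v j)⟫ = 0) ∧
      Antitone d ∧ (∀ i, 1 ≤ d i) ∧ ∀ i, T (v i) = d i • v i := by
  induction n generalizing E with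
  | zero =>
    exact ⟨finZeroElim, finZeroElim, Orthonormal.of_isEmpty _, finZeroElim,
      Subsingleton.antitone _, finZeroElim, finZeroElim⟩
  | succ n ih =>
    obtain ⟨μ, u, hu, hTu, hμ, hmax⟩ := exists_unit_eigenvector_max_of_mul_mul_eq hJ hT hTJ hn
    set W := Submodule.span ℝ (Set.range ![u, J u])
    have huW : u ∈ W := Submodule.subset_span ⟨0, rfl⟩
    have hJuW : J u ∈ W := Submodule.subset_span ⟨1, rfl⟩
    have hWT : W ∈ T.invtSubmodule := span_pair_mem_invtSubmodule (hTu ▸ W.smul_mem μ huW)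
      (apply_map_eq_inv_smul_of_mul_mul_eq hTJ hTu ▸ W.smul_mem μ⁻¹ hJuW)
    have hWJ : W ∈ J.invtSubmodule :=
      span_pair_mem_invtSubmodule hJuW (hJ.map_map u ▸ W.neg_mem huW)
    have hW : finrank ℝ Wᗮ = 2 * n := by
      have := W.finrank_add_finrank_orthogonal
      rw [finrank_span_eq_card (hJ.orthonormal_pair hu).linearIndependent, Fintype.card_fin] at this
      omega
    obtain ⟨d, v, hv, hvJ, hd, hd1, hTv⟩ := ih (hJ.restrict (hJ.orthogonal_mem_invtSubmodule hWJ))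
      (hT.restrict (hT.isSymmetric.orthogonalComplement_mem_invtSubmodule hWT))
      (LinearMap.ext fun x => Subtype.ext congr($hTJ x)) hW
    have hTv' : ∀ i, T (v i) = d i • (v i : E) := fun i => congr_arg Subtype.val (hTv i)
    refine ⟨Fin.cons μ d, Fin.cons u fun i => (v i : E),
      (hv.comp_linearIsometry Wᗮ.subtypeₗᵢ).fin_cons hu
        fun i => Submodule.inner_right_of_mem_orthogonal huW (v i).2,
      fun i j => ?_,
      Fin.antitone_cons hd fun i => hmax _ (hasEigenvalue_of_hasEigenvector
        ⟨mem_eigenspace_iff.2 (hTv' i), by simpa using hv.ne_zero i⟩),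
      Fin.cases hμ hd1, Fin.cases hTu hTv'⟩
    cases i using Fin.cases <;> cases j using Fin.cases
    · exact hJ.inner_self_map u
    · simp [hJ.inner_map_right, Submodule.inner_right_of_mem_orthogonal hJuW (v _).2]
    · simpa using Submodule.inner_left_of_mem_orthogonal hJuW (v _).2
    · exact hvJ _ _

theorem exists_symplectic_orthonormal_eigenbasis [FiniteDimensional ℝ E]
    (hJ : IsOrthogonalComplexStructure J) (hT : T.IsPositive) (hTJ : T * J * T = J) {n : ℕ}
    (hn : finrank ℝ E = 2 * n) :
    ∃ (d : Fin n → ℝ) (b : Fin n ⊕ Fin n → E), Orthonormal ℝ b ∧ Antitone d ∧ (∀ i, 1 ≤ d i) ∧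
      (∀ i, J (b (.inl i)) = -b (.inr i)) ∧ (∀ i, J (b (.inr i)) = b (.inl i)) ∧
      (∀ i, T (b (.inl i)) = d i • b (.inl i)) ∧ ∀ i, T (b (.inr i)) = (d i)⁻¹ • b (.inr i) := by
  obtain ⟨d, v, hv, hvJ, hd, hd1, hTv⟩ := exists_orthonormal_isotropic_eigenvectors hJ hT hTJ hn
  refine ⟨d, Sum.elim v fun i => -J (v i), hJ.orthonormal_sumElim hv hvJ, hd, hd1,
    fun i => (neg_neg _).symm, fun i => ?_, hTv, fun i => ?_⟩
  · simp [hJ.map_map]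
  · simp [apply_map_eq_inv_smul_of_mul_mul_eq hTJ (hTv i)]

end Symplectic

section Matrix

variable {ι κ : Type*} [Fintype ι] [DecidableEq ι]

theorem Matrix.inner_toEuclideanLin_left (M : Matrix ι ι ℝ) (x y : EuclideanSpace ℝ ι) :
    ⟪toEuclideanLin M x, y⟫ = ⟪x, toEuclideanLin Mᵀ y⟫ := by
  simp [EuclideanSpace.inner_eq_star_dotProduct, dotProduct_mulVec, mulVec_transpose]

theorem Matrix.transpose_mul_mul_apply_eq_inner (b : κ → EuclideanSpace ℝ ι) (M : Matrix ι ι ℝ)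
    (k l : κ) :
    ((of fun i j => b j i)ᵀ * M * of fun i j => b j i) k l = ⟪b k, toEuclideanLin M (b l)⟫ := by
  simp only [EuclideanSpace.inner_eq_star_dotProduct, Matrix.mul_apply, dotProduct, mulVec,
    transpose_apply, of_apply, toLpLin_apply, star_trivial, Finset.sum_mul]
  rw [Finset.sum_comm]
  exact Finset.sum_congr rfl fun _ _ => Finset.sum_congr rfl fun _ _ => by ring

end Matrix

theorem symplJ_transpose (n : ℕ) : (symplJ n)ᵀ = -symplJ n := by
  simp [symplJ, fromBlocks_transpose, fromBlocks_neg]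

theorem symplJ_mul_symplJ (n : ℕ) : symplJ n * symplJ n = -1 := by
  simp [symplJ, fromBlocks_multiply, ← fromBlocks_one, fromBlocks_neg]

theorem isOrthogonalComplexStructure_symplJ (n : ℕ) :
    IsOrthogonalComplexStructure (toEuclideanLin (symplJ n)) where
  inner_map_left x y := by
    rw [Matrix.inner_toEuclideanLin_left, symplJ_transpose, map_neg, LinearMap.neg_apply,
      inner_neg_right]
  map_map x := by simpa using congr(toEuclideanLin $(symplJ_mul_symplJ n) x)

theorem posDef_symplectic_spectral_decomposition_general (n : ℕ)
    (A : Matrix (Fin n ⊕ Fin n) (Fin n ⊕ Fin n) ℝ)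
    (hpd : A.PosDef)
    (hsympl : Aᵀ * symplJ n * A = symplJ n) :
    ∃ (Q : Matrix (Fin n ⊕ Fin n) (Fin n ⊕ Fin n) ℝ) (d : Fin n → ℝ),
      Qᵀ * Q = 1 ∧ Qᵀ * symplJ n * Q = symplJ n ∧
        Antitone d ∧ (∀ i, 1 ≤ d i) ∧
        A = Q * Matrix.fromBlocks (Matrix.diagonal d) 0 0
              (Matrix.diagonal fun i => (d i)⁻¹) * Qᵀ := by
  have hAJA : A * symplJ n * A = symplJ n := by
    rwa [← conjTranspose_eq_transpose_of_trivial, hpd.isHermitian.eq] at hsympl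
  obtain ⟨d, b, hb, hd, hd1, hJl, hJr, hAl, hAr⟩ :=
    exists_symplectic_orthonormal_eigenbasis (isOrthogonalComplexStructure_symplJ n)
      (isPositive_toEuclideanLin_iff.2 hpd.posSemidef)
      (LinearMap.ext fun x => by simpa using congr(toEuclideanLin $hAJA x))
      (n := n) (by simp [two_mul])
  set Q := of fun i j => b j i
  have hQ : Qᵀ * Q = 1 := by
    ext k l
    rw [← Matrix.mul_one Qᵀ, transpose_mul_mul_apply_eq_inner]
    simp [orthonormal_iff_ite.1 hb, Matrix.one_apply]
  have hQJ : Qᵀ * symplJ n * Q = symplJ n := by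
    ext k l
    rw [transpose_mul_mul_apply_eq_inner]
    rcases k with k | k <;> rcases l with l | l <;>
      simp [hJl, hJr, orthonormal_iff_ite.1 hb] <;> simp [symplJ, Matrix.one_apply]
  have hQA : Qᵀ * A * Q = fromBlocks (diagonal d) 0 0 (diagonal fun i => (d i)⁻¹) := by
    ext k l
    rw [transpose_mul_mul_apply_eq_inner]
    rcases k with k | k <;> rcases l with l | l <;>
      simp [hAl, hAr, orthonormal_iff_ite.1 hb, diagonal_apply, inner_smul_right] <;>
      split_ifs with h <;> simp [h]
  refine ⟨Q, d, hQ, hQJ, hd, hd1, ?_⟩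
  rw [← hQA, ← mul_assoc, ← mul_assoc, mul_eq_one_comm.1 hQ, one_mul, mul_assoc,
    mul_eq_one_comm.1 hQ, mul_one]

/-- Every symmetric positive definite symplectic `2n × 2n` real matrix `A` has a
spectral decomposition `A = Q · diag(D, D⁻¹) · Qᵀ` with `Q` orthogonal symplectic and
`D = diag(d₁, …, dₙ)`, `d₁ ≥ d₂ ≥ … ≥ dₙ ≥ 1`. -/
theorem posDef_symplectic_spectral_decomposition (n : ℕ)
    (A : Matrix (Fin n ⊕ Fin n) (Fin n ⊕ Fin n) ℝ)
    (hsym : Aᵀ = A) (hpd : A.PosDef)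
    (hsympl : Aᵀ * symplJ n * A = symplJ n) :
    ∃ (Q : Matrix (Fin n ⊕ Fin n) (Fin n ⊕ Fin n) ℝ) (d : Fin n → ℝ),
      Qᵀ * Q = 1 ∧ Qᵀ * symplJ n * Q = symplJ n ∧
        Antitone d ∧ (∀ i, 1 ≤ d i) ∧
        A = Q * Matrix.fromBlocks (Matrix.diagonal d) 0 0
              (Matrix.diagonal fun i => (d i)⁻¹) * Qᵀ :=
  posDef_symplectic_spectral_decomposition_general n A hpd hsympl
end

section
/- Every symmetric positive definite symplectic 2n×2n real matrix A can be written as A = [[I, 0], [C, I]] · [[G, 0], [0, G⁻¹]] · [[I, C], [0, I]], where G is an n×n symmetric positive definite matrix and C is an n×n symmetric matrix. -/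
/-!
Write `A = [[P, Q], [Qᵀ, S]]`. Since `A` is symmetric, `Aᵀ J A = J` reduces to the two block
equations `P Qᵀ = Q P` and `P S - Q² = 1`. The leading block `P` is positive definite, so `A` has
the block LDU decomposition with pivot `P` and Schur complement `S - Qᵀ P⁻¹ Q`; the first
equation says exactly that `C = P⁻¹ Q` is symmetric, and then the second one turns the Schur
complement into `P⁻¹`.
-/

open Matrix

namespace Matrix

variable {m R : Type*} [Fintype m] [DecidableEq m] [CommRing R]

theorem fromBlocks_mul_fromBlocks_J_mul_fromBlocks (P Q Q' S : Matrix m m R) :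
    fromBlocks P Q Q' S * fromBlocks 0 1 (-1) 0 * fromBlocks P Q Q' S =
      fromBlocks (P * Q' - Q * P) (P * S - Q * Q) (Q' * Q' - S * P) (Q' * S - S * Q) := by
  simp only [fromBlocks_multiply]
  congr 1 <;> noncomm_ring

theorem mul_transpose_eq_and_mul_sub_mul_eq_one_of_fromBlocks_J {P Q S : Matrix m m R}
    (h : fromBlocks P Q Qᵀ S * fromBlocks 0 1 (-1) 0 * fromBlocks P Q Qᵀ S =
      fromBlocks 0 1 (-1) 0) :
    P * Qᵀ = Q * P ∧ P * S - Q * Q = 1 := by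
  rw [fromBlocks_mul_fromBlocks_J_mul_fromBlocks] at h
  obtain ⟨h₁₁, h₁₂, -, -⟩ := fromBlocks_inj.mp h
  exact ⟨sub_eq_zero.mp h₁₁, h₁₂⟩

theorem transpose_nonsing_inv_mul_eq {P Q : Matrix m m R} (hP : IsUnit P.det) (hPsymm : Pᵀ = P)
    (hcomm : P * Qᵀ = Q * P) : (P⁻¹ * Q)ᵀ = P⁻¹ * Q := by
  calc (P⁻¹ * Q)ᵀ = P⁻¹ * (P * Qᵀ) * P⁻¹ := by
        rw [transpose_mul, transpose_nonsing_inv, hPsymm, nonsing_inv_mul_cancel_left _ _ hP]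
    _ = P⁻¹ * Q := by rw [hcomm, ← Matrix.mul_assoc, mul_nonsing_inv_cancel_right _ _ hP]

theorem fromBlocks_eq_lower_mul_diagonal_mul_upper {P Q S : Matrix m m R} (hP : IsUnit P.det)
    (hPsymm : Pᵀ = P) (hcomm : P * Qᵀ = Q * P) (hPS : P * S - Q * Q = 1) :
    fromBlocks P Q Qᵀ S =
      fromBlocks 1 0 (P⁻¹ * Q) 1 * fromBlocks P 0 0 P⁻¹ * fromBlocks 1 (P⁻¹ * Q) 0 1 := by
  let := P.invertibleOfIsUnitDet hP
  have hC : Qᵀ * P⁻¹ = P⁻¹ * Q := by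
    rw [← transpose_nonsing_inv_mul_eq hP hPsymm hcomm, transpose_mul, transpose_nonsing_inv,
      hPsymm]
  have hSchur : S - P⁻¹ * Q * Q = P⁻¹ := by
    rw [← nonsing_inv_mul_cancel_left P S hP, Matrix.mul_assoc, ← Matrix.mul_sub, hPS,
      Matrix.mul_one]
  rw [fromBlocks_eq_of_invertible₁₁ P, invOf_eq_nonsing_inv, hC, hSchur]

end Matrix

/-- Every symmetric positive definite symplectic `2n × 2n` real matrix `A` can be
written as `A = [[I, 0], [C, I]] · [[G, 0], [0, G⁻¹]] · [[I, C], [0, I]]`, where `G` is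
symmetric positive definite and `C` is symmetric. -/
theorem posDef_symplectic_factorization (n : ℕ)
    (A : Matrix (Fin n ⊕ Fin n) (Fin n ⊕ Fin n) ℝ)
    (hsym : Aᵀ = A) (hpd : A.PosDef)
    (hsympl : Aᵀ * symplJ n * A = symplJ n) :
    ∃ G C : Matrix (Fin n) (Fin n) ℝ,
      Gᵀ = G ∧ G.PosDef ∧ Cᵀ = C ∧
        A = Matrix.fromBlocks 1 0 C 1 * Matrix.fromBlocks G 0 0 G⁻¹ *
              Matrix.fromBlocks 1 C 0 1 := by
  obtain ⟨P, Q, Q', S, rfl⟩ : ∃ P Q Q' S, A = fromBlocks P Q Q' S :=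
    ⟨_, _, _, _, (fromBlocks_toBlocks A).symm⟩
  obtain ⟨hPsymm, rfl, -, -⟩ := isSymm_fromBlocks_iff.mp hsym
  have hPpd : P.PosDef := hpd.submatrix Sum.inl_injective
  have hP : IsUnit P.det := hPpd.det_pos.ne'.isUnit
  rw [hsym, symplJ] at hsympl
  obtain ⟨hcomm, hPS⟩ := mul_transpose_eq_and_mul_sub_mul_eq_one_of_fromBlocks_J hsympl
  exact ⟨P, P⁻¹ * Q, hPsymm, hPpd, transpose_nonsing_inv_mul_eq hP hPsymm hcomm,
    fromBlocks_eq_lower_mul_diagonal_mul_upper hP hPsymm hcomm hPS⟩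
end

section
/- Let A be a symmetric positive definite symplectic 2n×2n real matrix, partitioned into n×n blocks A = [[A11, A12], [A12ᵀ, A22]]. Then the Schur complement S = A22 − A12ᵀ·A11⁻¹·A12 of A11 in A is symmetric positive definite and satisfies S = A11⁻¹. -/
/-! Written blockwise, `Aᵀ J A = J` says `A11 A12ᵀ = A12 A11` and `A11 A22 - A12 A12 = 1`
(using `A11ᵀ = A11`). The first lets `A11` pass through `A12ᵀ A11⁻¹ A12`, so `A11 S = 1`;
positivity of `S` is then that of `A11⁻¹`, and `A11` is a principal block of `A`. -/

open Matrix

theorem Matrix.PosDef.of_fromBlocks₁₁ {m n R : Type*} [Fintype m] [Fintype n]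
    [CommRing R] [PartialOrder R] [StarRing R]
    {A : Matrix m m R} {B : Matrix m n R} {C : Matrix n m R} {D : Matrix n n R}
    (h : (fromBlocks A B C D).PosDef) : A.PosDef :=
  h.submatrix Sum.inl_injective

theorem transpose_mul_symplJ_mul_fromBlocks {n : ℕ} (P Q R T : Matrix (Fin n) (Fin n) ℝ) :
    (fromBlocks P Q R T)ᵀ * symplJ n * fromBlocks P Q R T =
      fromBlocks (Pᵀ * R - Rᵀ * P) (Pᵀ * T - Rᵀ * Q) (Qᵀ * R - Tᵀ * P) (Qᵀ * T - Tᵀ * Q) := by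
  rw [fromBlocks_transpose, symplJ, fromBlocks_multiply, fromBlocks_multiply]
  congr 1 <;> noncomm_ring

theorem sub_transpose_mul_inv_mul_eq_inv {m α : Type*} [Fintype m] [DecidableEq m] [CommRing α]
    {P Q T : Matrix m m α} (hP : IsUnit P.det) (hcomm : P * Qᵀ = Q * P)
    (hone : P * T - Q * Q = 1) : T - Qᵀ * P⁻¹ * Q = P⁻¹ := by
  refine (inv_eq_right_inv ?_).symm
  calc P * (T - Qᵀ * P⁻¹ * Q) = P * T - Q * (P * P⁻¹) * Q := by
        rw [Matrix.mul_sub, ← Matrix.mul_assoc, ← Matrix.mul_assoc, hcomm]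
        simp only [Matrix.mul_assoc]
    _ = 1 := by rw [mul_nonsing_inv _ hP, Matrix.mul_one, hone]

theorem schur_complement_eq_inv_general (n : ℕ)
    (A11 A12 A22 : Matrix (Fin n) (Fin n) ℝ)
    (A : Matrix (Fin n ⊕ Fin n) (Fin n ⊕ Fin n) ℝ)
    (hA : A = Matrix.fromBlocks A11 A12 A12ᵀ A22)
    (hpd : A.PosDef)
    (hsympl : Aᵀ * symplJ n * A = symplJ n)
    (S : Matrix (Fin n) (Fin n) ℝ)
    (hS : S = A22 - A12ᵀ * A11⁻¹ * A12) :
    S.PosDef ∧ S = A11⁻¹ := by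
  subst hA
  have hA11 : A11.PosDef := hpd.of_fromBlocks₁₁
  have hA11_symm : A11ᵀ = A11 := by
    simpa only [conjTranspose_eq_transpose_of_trivial] using hA11.isHermitian.eq
  rw [transpose_mul_symplJ_mul_fromBlocks, symplJ, transpose_transpose, hA11_symm] at hsympl
  obtain ⟨h₁₁, h₁₂, -, -⟩ := fromBlocks_inj.mp hsympl
  have hSeq : S = A11⁻¹ := hS.trans <| sub_transpose_mul_inv_mul_eq_inv
    (isUnit_iff_ne_zero.mpr hA11.det_pos.ne') (sub_eq_zero.mp h₁₁) h₁₂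
  exact ⟨hSeq ▸ hA11.inv, hSeq⟩

/-- For a symmetric positive definite symplectic matrix
`A = [[A11, A12], [A12ᵀ, A22]]`, the Schur complement
`S = A22 − A12ᵀ A11⁻¹ A12` of `A11` in `A` is symmetric positive definite and
equals `A11⁻¹`. -/
theorem schur_complement_eq_inv (n : ℕ)
    (A11 A12 A22 : Matrix (Fin n) (Fin n) ℝ)
    (A : Matrix (Fin n ⊕ Fin n) (Fin n ⊕ Fin n) ℝ)
    (hA : A = Matrix.fromBlocks A11 A12 A12ᵀ A22)
    (hsym : Aᵀ = A) (hpd : A.PosDef)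
    (hsympl : Aᵀ * symplJ n * A = symplJ n)
    (S : Matrix (Fin n) (Fin n) ℝ)
    (hS : S = A22 - A12ᵀ * A11⁻¹ * A12) :
    S.PosDef ∧ S = A11⁻¹ :=
  schur_complement_eq_inv_general n A11 A12 A22 A hA hpd hsympl S hS
end

section
/- Let A be a symmetric positive definite symplectic 2n×2n real matrix partitioned into n×n blocks A = [[A11, A12], [A12ᵀ, A22]], and let A11 = L11·L11ᵀ be the Cholesky decomposition of A11 (L11 lower triangular with positive diagonal entries). Then A = L·Lᵀ, where L is the 2n×2n block matrix L = [[L11, 0], [(L11⁻¹·A12)ᵀ, (L11⁻¹)ᵀ]], and the matrix L is symplectic. -/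
open Matrix

/-- If `A = [[A11, A12], [A12ᵀ, A22]]` is symmetric positive definite symplectic and
`A11 = L11 L11ᵀ` is the Cholesky decomposition of `A11`, then `A = L Lᵀ` where
`L = [[L11, 0], [(L11⁻¹ A12)ᵀ, (L11⁻¹)ᵀ]]`, and `L` is symplectic. -/
theorem symplectic_LLT_factorization (n : ℕ)
    (A11 A12 A22 : Matrix (Fin n) (Fin n) ℝ)
    (A : Matrix (Fin n ⊕ Fin n) (Fin n ⊕ Fin n) ℝ)
    (hA : A = Matrix.fromBlocks A11 A12 A12ᵀ A22)
    (hsym : Aᵀ = A) (hpd : A.PosDef)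
    (hsympl : Aᵀ * symplJ n * A = symplJ n)
    (L11 : Matrix (Fin n) (Fin n) ℝ)
    (hL11tri : ∀ i j : Fin n, i < j → L11 i j = 0)
    (hL11diag : ∀ i : Fin n, 0 < L11 i i)
    (hChol : A11 = L11 * L11ᵀ)
    (L : Matrix (Fin n ⊕ Fin n) (Fin n ⊕ Fin n) ℝ)
    (hL : L = Matrix.fromBlocks L11 0 (L11⁻¹ * A12)ᵀ (L11⁻¹)ᵀ) :
    A = L * Lᵀ ∧ Lᵀ * symplJ n * L = symplJ n := by
  -- L11 invertible
  have hu : IsUnit L11.det := by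
    have hdet : L11.det = ∏ i, L11 i i := det_of_lowerTriangular L11 (fun i j h => hL11tri i j h)
    rw [isUnit_iff_ne_zero, hdet]
    exact (Finset.prod_pos fun i _ => hL11diag i).ne'
  have hut : IsUnit L11ᵀ.det := by rwa [det_transpose]
  have huA : IsUnit A11.det := by rw [hChol, det_mul]; exact hu.mul hut
  have c1 : ∀ B, L11⁻¹ * (L11 * B) = B := fun B => nonsing_inv_mul_cancel_left _ _ hu
  have c2 : ∀ B, L11 * (L11⁻¹ * B) = B := fun B => mul_nonsing_inv_cancel_left _ _ hu
  have c3 : ∀ B, (L11ᵀ)⁻¹ * (L11ᵀ * B) = B := fun B => nonsing_inv_mul_cancel_left _ _ hut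
  have c4 : ∀ B, L11ᵀ * ((L11ᵀ)⁻¹ * B) = B := fun B => mul_nonsing_inv_cancel_left _ _ hut
  have hli : L11⁻¹ * L11 = 1 := nonsing_inv_mul _ hu
  have hri : L11 * L11⁻¹ = 1 := mul_nonsing_inv _ hu
  have hlit : (L11ᵀ)⁻¹ * L11ᵀ = 1 := nonsing_inv_mul _ hut
  have hrit : L11ᵀ * (L11ᵀ)⁻¹ = 1 := mul_nonsing_inv _ hut
  -- symplectic block equations
  have hS : Matrix.fromBlocks (A11 * A12ᵀ - A12 * A11) (A11 * A22 - A12 * A12)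
      (A12ᵀ * A12ᵀ - A22 * A11) (A12ᵀ * A22 - A22 * A12)
      = (Matrix.fromBlocks 0 1 (-1) 0 : Matrix (Fin n ⊕ Fin n) (Fin n ⊕ Fin n) ℝ) := by
    rw [hsym] at hsympl
    rw [hA] at hsympl
    unfold symplJ at hsympl
    rw [fromBlocks_multiply, fromBlocks_multiply] at hsympl
    convert hsympl using 2 <;> noncomm_ring
  have e1 : A11 * A12ᵀ = A12 * A11 := by
    have h := congrArg Matrix.toBlocks₁₁ hS
    simp only [toBlocks_fromBlocks₁₁, sub_eq_zero] at h
    exact h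
  have e2 : A11 * A22 - A12 * A12 = 1 := by
    have h := congrArg Matrix.toBlocks₁₂ hS
    simpa only [toBlocks_fromBlocks₁₂] using h
  -- key symmetry fact: L11ᵀ * (L11⁻¹ * A12)ᵀ = (L11⁻¹ * A12) * L11
  have key : L11ᵀ * (L11⁻¹ * A12)ᵀ = (L11⁻¹ * A12) * L11 := by
    have h := congrArg (fun M => L11⁻¹ * M * (L11ᵀ)⁻¹) e1
    simp only [hChol, Matrix.mul_assoc, c1, transpose_mul, transpose_nonsing_inv] at h ⊢
    rw [mul_nonsing_inv _ hut, Matrix.mul_one] at h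
    rw [h, ← Matrix.mul_assoc]
  have key' : ∀ X, (L11⁻¹ * A12) * (L11 * X) = L11ᵀ * ((L11⁻¹ * A12)ᵀ * X) := by
    intro X
    rw [← Matrix.mul_assoc, ← Matrix.mul_assoc, key]
  -- A22 expression
  have hA22 : A22 = (L11⁻¹ * A12)ᵀ * (L11⁻¹ * A12) + (L11ᵀ)⁻¹ * L11⁻¹ := by
    have e2' : A22 = A11⁻¹ * (1 + A12 * A12) := by
      have h : A11 * A22 = 1 + A12 * A12 := by linear_combination (norm := noncomm_ring) e2
      rw [← h, ← Matrix.mul_assoc, nonsing_inv_mul _ huA, Matrix.one_mul]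
    have step : L11⁻¹ * (A12 * A12) = L11ᵀ * ((L11⁻¹ * A12)ᵀ * (L11⁻¹ * A12)) := by
      rw [← key' (L11⁻¹ * A12), c2, ← Matrix.mul_assoc]
    rw [e2', hChol, Matrix.mul_inv_rev, Matrix.mul_add, Matrix.mul_one, Matrix.mul_assoc,
        step, c3]
    exact add_comm _ _
  refine ⟨?_, ?_⟩
  · rw [hA, hL, fromBlocks_transpose, fromBlocks_multiply]
    rw [transpose_transpose, transpose_transpose, transpose_zero]
    rw [fromBlocks_inj]
    refine ⟨?_, ?_, ?_, ?_⟩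
    · simp [← hChol]
    · simp [c2]
    · simp only [transpose_mul, Matrix.mul_assoc, Matrix.zero_mul, Matrix.mul_zero, add_zero,
        transpose_nonsing_inv]
      rw [nonsing_inv_mul _ hut, Matrix.mul_one]
    · simp only [Matrix.zero_mul, Matrix.mul_zero, zero_add, add_zero, transpose_nonsing_inv]
      rw [hA22]
  · rw [hL, fromBlocks_transpose]
    unfold symplJ
    rw [fromBlocks_multiply, fromBlocks_multiply]
    rw [transpose_transpose, transpose_transpose, transpose_zero]
    rw [fromBlocks_inj]
    refine ⟨?_, ?_, ?_, ?_⟩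
    · simp only [Matrix.mul_zero, Matrix.mul_one, Matrix.mul_neg, Matrix.zero_mul,
        Matrix.mul_zero, zero_add, add_zero, transpose_nonsing_inv,
        Matrix.neg_mul]
      rw [key]
      exact neg_add_cancel _
    · simp only [Matrix.mul_zero, Matrix.mul_one, Matrix.mul_neg, Matrix.zero_mul,
        zero_add, add_zero, transpose_nonsing_inv, Matrix.neg_mul]
      exact hrit
    · simp only [Matrix.mul_zero, Matrix.mul_one, Matrix.mul_neg, Matrix.zero_mul,
        zero_add, add_zero, Matrix.neg_mul, hli]
    · simp
end

section
/- Let A be a symmetric positive definite symplectic 2n×2n real matrix partitioned into n×n blocks A = [[A11, A12], [A12ᵀ, A22]], let A11 = L11·L11ᵀ be the Cholesky decomposition of A11 (L11 lower triangular with positive diagonal entries), and let S = A22 − A12ᵀ·A11⁻¹·A12 be the Schur complement of A11 in A. If S = U·Uᵀ is the Reverse Cholesky decomposition of S (U upper triangular with positive diagonal entries), then U = (L11⁻¹)ᵀ. -/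
/-!
Writing `AᵀJA = J` blockwise for the symmetric `A` gives `A₁₁A₁₂ᵀ = A₁₂A₁₁` and
`A₁₁A₂₂ - A₁₂² = I`, which together say that the Schur complement `S` is `A₁₁⁻¹`.
Hence `S = V Vᵀ` with `V = (L₁₁⁻¹)ᵀ` upper triangular with positive diagonal. Such
factorizations are unique: if also `S = U Uᵀ`, then `V⁻¹U` is upper triangular with positive
diagonal and orthogonal, and its transpose, being its inverse, is upper triangular as well, so
`V⁻¹U = I`.
-/

open Matrix

theorem fromBlocks_mul_symplJ_mul_fromBlocks {n : ℕ} (P Q R T : Matrix (Fin n) (Fin n) ℝ) :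
    fromBlocks P Q R T * symplJ n * fromBlocks P Q R T =
      fromBlocks (P * R - Q * P) (P * T - Q * Q) (R * R - T * P) (R * T - T * Q) := by
  simp only [symplJ, fromBlocks_multiply]
  congr 1 <;> noncomm_ring

namespace Matrix

theorem schur_complement_eq_inv {n R : Type*} [Fintype n] [DecidableEq n] [CommRing R]
    {A11 A12 A22 : Matrix n n R} (hA11 : IsUnit A11.det) (h1 : A11 * A12ᵀ = A12 * A11)
    (h2 : A11 * A22 - A12 * A12 = 1) : A22 - A12ᵀ * A11⁻¹ * A12 = A11⁻¹ := by
  refine (inv_eq_right_inv ?_).symm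
  rw [Matrix.mul_sub, ← Matrix.mul_assoc, ← Matrix.mul_assoc, h1, Matrix.mul_assoc A12,
    mul_nonsing_inv _ hA11, Matrix.mul_one, h2]

variable {m R : Type*} [Fintype m] [LinearOrder m]

theorem IsUpperTriangular.diag_mul [NonUnitalNonAssocSemiring R] {M N : Matrix m m R}
    (hM : M.IsUpperTriangular) (hN : N.IsUpperTriangular) (i : m) :
    (M * N) i i = M i i * N i i := by
  rw [mul_apply]
  refine Finset.sum_eq_single i (fun k _ hk => ?_) (by simp)
  rcases hk.lt_or_gt with h | h
  · rw [hM h, zero_mul]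
  · rw [hN h, mul_zero]

def IsUpperTriangularPosDiag [Zero R] [LT R] (M : Matrix m m R) : Prop :=
  M.IsUpperTriangular ∧ ∀ i, 0 < M i i

namespace IsUpperTriangularPosDiag

variable [Field R] [LinearOrder R] [IsStrictOrderedRing R] {M N : Matrix m m R}

theorem isUnit_det (hM : M.IsUpperTriangularPosDiag) : IsUnit M.det := by
  rw [det_of_isUpperTriangular hM.1, isUnit_iff_ne_zero]
  exact Finset.prod_ne_zero_iff.mpr fun i _ => (hM.2 i).ne'

theorem mul (hM : M.IsUpperTriangularPosDiag) (hN : N.IsUpperTriangularPosDiag) :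
    (M * N).IsUpperTriangularPosDiag :=
  ⟨hM.1.mul hN.1, fun i => by rw [hM.1.diag_mul hN.1]; exact mul_pos (hM.2 i) (hN.2 i)⟩

theorem inv (hM : M.IsUpperTriangularPosDiag) : M⁻¹.IsUpperTriangularPosDiag := by
  have := M.invertibleOfIsUnitDet hM.isUnit_det
  have hinv : M⁻¹.IsUpperTriangular := blockTriangular_inv_of_blockTriangular hM.1
  refine ⟨hinv, fun i => ?_⟩
  have h := hinv.diag_mul hM.1 i
  rw [inv_mul_of_invertible, one_apply_eq] at h
  rw [eq_inv_of_mul_eq_one_left h.symm]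
  exact inv_pos.mpr (hM.2 i)

theorem eq_one_of_mul_transpose_eq_one (hM : M.IsUpperTriangularPosDiag) (h : M * Mᵀ = 1) :
    M = 1 := by
  have hMT : Mᵀ.IsUpperTriangular := by
    have := invertibleOfRightInverse M _ h
    rw [← inv_eq_right_inv h]
    exact blockTriangular_inv_of_blockTriangular hM.1
  ext i j
  rcases lt_trichotomy i j with hij | rfl | hij
  · rw [one_apply_ne hij.ne, ← transpose_apply M, hMT hij]
  · have hii := hM.1.diag_mul hMT i
    rw [h, one_apply_eq, transpose_apply] at hii
    rw [one_apply_eq]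
    nlinarith [hM.2 i]
  · rw [one_apply_ne hij.ne', hM.1 hij]

theorem eq_of_mul_transpose_eq (hM : M.IsUpperTriangularPosDiag) (hN : N.IsUpperTriangularPosDiag)
    (h : M * Mᵀ = N * Nᵀ) : M = N := by
  have := N.invertibleOfIsUnitDet hN.isUnit_det
  have hQ : (N⁻¹ * M) * (N⁻¹ * M)ᵀ = 1 := by
    rw [transpose_mul, transpose_nonsing_inv, Matrix.mul_assoc, ← Matrix.mul_assoc M, h,
      ← Matrix.mul_assoc, inv_mul_cancel_left_of_invertible, mul_inv_of_invertible]
  have hQ1 := (hN.inv.mul hM).eq_one_of_mul_transpose_eq_one hQ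
  rw [← mul_inv_cancel_left_of_invertible N M, hQ1, Matrix.mul_one]

end IsUpperTriangularPosDiag

end Matrix

theorem reverse_cholesky_of_schur_complement_general (n : ℕ)
    (A11 A12 A22 : Matrix (Fin n) (Fin n) ℝ)
    (A : Matrix (Fin n ⊕ Fin n) (Fin n ⊕ Fin n) ℝ)
    (hA : A = Matrix.fromBlocks A11 A12 A12ᵀ A22)
    (hsym : Aᵀ = A)
    (hsympl : Aᵀ * symplJ n * A = symplJ n)
    (L11 : Matrix (Fin n) (Fin n) ℝ)
    (hL11tri : ∀ i j : Fin n, i < j → L11 i j = 0)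
    (hL11diag : ∀ i : Fin n, 0 < L11 i i)
    (hChol : A11 = L11 * L11ᵀ)
    (S : Matrix (Fin n) (Fin n) ℝ)
    (hS : S = A22 - A12ᵀ * A11⁻¹ * A12)
    (U : Matrix (Fin n) (Fin n) ℝ)
    (hUtri : ∀ i j : Fin n, j < i → U i j = 0)
    (hUdiag : ∀ i : Fin n, 0 < U i i)
    (hRevChol : S = U * Uᵀ) :
    U = (L11⁻¹)ᵀ := by
  have hLT : L11ᵀ.IsUpperTriangularPosDiag := ⟨fun i j h => hL11tri j i h, hL11diag⟩
  have hV : (L11⁻¹)ᵀ.IsUpperTriangularPosDiag := transpose_nonsing_inv L11 ▸ hLT.inv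
  have hA11 : IsUnit A11.det := by
    rw [hChol, det_mul, ← det_transpose L11]
    exact hLT.isUnit_det.mul hLT.isUnit_det
  rw [hsym, hA, fromBlocks_mul_symplJ_mul_fromBlocks, symplJ, fromBlocks_inj] at hsympl
  obtain ⟨h1, h2, -, -⟩ := hsympl
  have hSinv : S = A11⁻¹ := hS.trans (schur_complement_eq_inv hA11 (sub_eq_zero.mp h1) h2)
  refine IsUpperTriangularPosDiag.eq_of_mul_transpose_eq ⟨hUtri, hUdiag⟩ hV ?_
  rw [← hRevChol, hSinv, hChol, Matrix.mul_inv_rev, transpose_transpose, ← transpose_nonsing_inv]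

/-- If `A = [[A11, A12], [A12ᵀ, A22]]` is symmetric positive definite symplectic,
`A11 = L11 L11ᵀ` is the Cholesky decomposition of `A11`, and `S = U Uᵀ` is the Reverse
Cholesky decomposition of the Schur complement `S = A22 − A12ᵀ A11⁻¹ A12`, then
`U = (L11⁻¹)ᵀ`. -/
theorem reverse_cholesky_of_schur_complement (n : ℕ)
    (A11 A12 A22 : Matrix (Fin n) (Fin n) ℝ)
    (A : Matrix (Fin n ⊕ Fin n) (Fin n ⊕ Fin n) ℝ)
    (hA : A = Matrix.fromBlocks A11 A12 A12ᵀ A22)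
    (hsym : Aᵀ = A) (hpd : A.PosDef)
    (hsympl : Aᵀ * symplJ n * A = symplJ n)
    (L11 : Matrix (Fin n) (Fin n) ℝ)
    (hL11tri : ∀ i j : Fin n, i < j → L11 i j = 0)
    (hL11diag : ∀ i : Fin n, 0 < L11 i i)
    (hChol : A11 = L11 * L11ᵀ)
    (S : Matrix (Fin n) (Fin n) ℝ)
    (hS : S = A22 - A12ᵀ * A11⁻¹ * A12)
    (U : Matrix (Fin n) (Fin n) ℝ)
    (hUtri : ∀ i j : Fin n, j < i → U i j = 0)
    (hUdiag : ∀ i : Fin n, 0 < U i i)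
    (hRevChol : S = U * Uᵀ) :
    U = (L11⁻¹)ᵀ :=
  reverse_cholesky_of_schur_complement_general n A11 A12 A22 A hA hsym hsympl L11 hL11tri hL11diag
    hChol S hS U hUtri hUdiag hRevChol
end

section
/- Let X be a 2n×2n real matrix with Δ(X) = ‖XᵀJX − J‖₂ < 1. Then X is nonsingular and κ₂(X) = ‖X⁻¹‖₂·‖X‖₂ ≤ ‖X‖₂² / (1 − Δ(X)). -/
/-!
Since `J` is orthogonal, `A := Jᵀ Xᵀ J` is an approximate left inverse of `X`:
`A X - 1 = Jᵀ (Xᵀ J X - J)` has norm `Δ(X) < 1`, and `‖A‖ = ‖X‖`. Then `A X` is invertible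
(Neumann series), `B = (A X)⁻¹ A` is an exact left inverse of `X`, and `B = A - (A X - 1) B`
gives `‖B‖ ≤ ‖A‖ / (1 - ‖A X - 1‖)`. A left inverse of a square matrix is its inverse.
-/

open Matrix
open scoped Matrix.Norms.L2Operator

theorem exists_left_inv_norm_le_of_norm_mul_sub_one_lt_one {R : Type*} [NormedRing R]
    [HasSummableGeomSeries R] {A X : R} (h : ‖A * X - 1‖ < 1) :
    ∃ B : R, B * X = 1 ∧ ‖B‖ ≤ ‖A‖ / (1 - ‖A * X - 1‖) := by
  have hAX : IsUnit (A * X) := by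
    simpa using isUnit_one_sub_of_norm_lt_one (x := 1 - A * X) (by rwa [norm_sub_rev])
  set V := (hAX.unit⁻¹ : Rˣ).val
  refine ⟨V * A, by rw [mul_assoc]; exact hAX.val_inv_mul, ?_⟩
  have hfix : V * A = A - (A * X - 1) * (V * A) := by
    have : A * X * V = 1 := hAX.mul_val_inv
    calc V * A = A - (A * X * V - V) * A := by rw [this]; noncomm_ring
      _ = A - (A * X - 1) * (V * A) := by noncomm_ring
  rw [le_div_iff₀ (by linarith)]
  have : ‖V * A‖ ≤ ‖A‖ + ‖A * X - 1‖ * ‖V * A‖ := by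
    calc ‖V * A‖ ≤ ‖A‖ + ‖(A * X - 1) * (V * A)‖ :=
          (congrArg norm hfix).trans_le (norm_sub_le _ _)
      _ ≤ ‖A‖ + ‖A * X - 1‖ * ‖V * A‖ := by gcongr; exact norm_mul_le _ _
  linarith

theorem exists_left_inv_norm_le_of_norm_star_mul_mul_sub_lt_one {R : Type*} [NormedRing R]
    [StarRing R] [CStarRing R] [HasSummableGeomSeries R] {J X : R} (hJ : J ∈ unitary R)
    (h : ‖star X * J * X - J‖ < 1) :
    ∃ B : R, B * X = 1 ∧ ‖B‖ ≤ ‖X‖ / (1 - ‖star X * J * X - J‖) := by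
  have hJ' : star J ∈ unitary R := Unitary.star_mem hJ
  have hloss : star J * star X * J * X - 1 = star J * (star X * J * X - J) := by
    rw [mul_sub, Unitary.star_mul_self_of_mem hJ]
    simp only [mul_assoc]
  have hnorm : ‖star J * star X * J‖ = ‖X‖ := by
    rw [CStarRing.norm_mul_mem_unitary _ hJ, CStarRing.norm_mem_unitary_mul _ hJ', norm_star]
  simpa only [hloss, hnorm, CStarRing.norm_mem_unitary_mul _ hJ'] using
    exists_left_inv_norm_le_of_norm_mul_sub_one_lt_one (A := star J * star X * J) (X := X)
      (by rwa [hloss, CStarRing.norm_mem_unitary_mul _ hJ'])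

theorem symplJ_mem_unitary (n : ℕ) :
    symplJ n ∈ unitary (Matrix (Fin n ⊕ Fin n) (Fin n ⊕ Fin n) ℝ) := by
  refine Matrix.mem_unitaryGroup_iff'.mpr ?_
  simp [symplJ, star_eq_conjTranspose, fromBlocks_transpose, fromBlocks_multiply,
    ← fromBlocks_one]

/-- If `Δ(X) = ‖Xᵀ J X − J‖₂ < 1`, then `X` is nonsingular and
`κ₂(X) = ‖X⁻¹‖₂ ‖X‖₂ ≤ ‖X‖₂² / (1 − Δ(X))`. -/
theorem nonsingular_and_condition_bound_of_loss_lt_one (n : ℕ)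
    (X : Matrix (Fin n ⊕ Fin n) (Fin n ⊕ Fin n) ℝ)
    (hΔ : ‖Xᵀ * symplJ n * X - symplJ n‖ < 1) :
    IsUnit X ∧
      ‖X⁻¹‖ * ‖X‖ ≤ ‖X‖ ^ 2 / (1 - ‖Xᵀ * symplJ n * X - symplJ n‖) := by
  have hstar : star X = Xᵀ := by
    rw [star_eq_conjTranspose, conjTranspose_eq_transpose_of_trivial]
  obtain ⟨B, hBX, hB⟩ := exists_left_inv_norm_le_of_norm_star_mul_mul_sub_lt_one
    (symplJ_mem_unitary n) (hstar ▸ hΔ)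
  rw [hstar] at hB
  refine ⟨(isUnit_iff_isUnit_det X).mpr (isUnit_det_of_left_inverse hBX), ?_⟩
  rw [inv_eq_left_inv hBX, sq, mul_div_right_comm]
  exact mul_le_mul_of_nonneg_right hB (norm_nonneg X)
end

section
/- Let A be a symplectic 2n×2n real matrix and let the perturbed matrix Â = A + E satisfy ‖E‖₂ ≤ ε‖A‖₂ with 0 < ε < 1. Then Δ(Â) = ‖ÂᵀJÂ − J‖₂ ≤ ‖Â‖₂² · (2ε + ε²)/(1 − ε)². -/
open Matrix
open scoped Matrix.Norms.L2Operator

/-!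
Since `Aᵀ J A = J`, the defect of `Â = A + E` is `Aᵀ J E + Eᵀ J A + Eᵀ J E`. The spectral norm is
invariant under transposition and `J` is orthogonal, so this defect has norm at most
`2 ‖A‖ ‖E‖ + ‖E‖² ≤ (2ε + ε²) ‖A‖²`. Finally the reverse triangle inequality gives
`(1 - ε) ‖A‖ ≤ ‖Â‖`, which turns this into a bound in terms of `‖Â‖`.
-/

namespace Matrix

lemma transpose_mul_mul_add_sub_of_transpose_mul_mul_eq {n R : Type*} [Fintype n] [Ring R]
    {A J : Matrix n n R} (hA : Aᵀ * J * A = J) (E : Matrix n n R) :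
    (A + E)ᵀ * J * (A + E) - J = Aᵀ * J * E + Eᵀ * J * A + Eᵀ * J * E := by
  rw [transpose_add, Matrix.add_mul, Matrix.add_mul, Matrix.mul_add, Matrix.mul_add, hA]
  abel

variable {m n l : Type*} [Fintype m] [Fintype n] [Fintype l] [DecidableEq m] [DecidableEq n]
  [DecidableEq l]

lemma l2_opNorm_transpose (A : Matrix m n ℝ) : ‖Aᵀ‖ = ‖A‖ := by
  rw [← conjTranspose_eq_transpose_of_trivial, l2_opNorm_conjTranspose]

lemma l2_opNorm_transpose_mul_mul_le (X : Matrix m n ℝ) (J : Matrix m m ℝ) (Y : Matrix m l ℝ) :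
    ‖Xᵀ * J * Y‖ ≤ ‖X‖ * ‖J‖ * ‖Y‖ :=
  calc ‖Xᵀ * J * Y‖ ≤ ‖Xᵀ‖ * ‖J‖ * ‖Y‖ := by grw [l2_opNorm_mul, l2_opNorm_mul]
    _ = ‖X‖ * ‖J‖ * ‖Y‖ := by rw [l2_opNorm_transpose]

lemma l2_opNorm_transpose_mul_mul_add_sub_le {A J : Matrix n n ℝ} (hA : Aᵀ * J * A = J)
    (E : Matrix n n ℝ) :
    ‖(A + E)ᵀ * J * (A + E) - J‖ ≤ ‖J‖ * (2 * ‖A‖ * ‖E‖ + ‖E‖ ^ 2) := by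
  rw [transpose_mul_mul_add_sub_of_transpose_mul_mul_eq hA]
  calc _ ≤ ‖Aᵀ * J * E‖ + ‖Eᵀ * J * A‖ + ‖Eᵀ * J * E‖ := norm_add₃_le
    _ ≤ ‖A‖ * ‖J‖ * ‖E‖ + ‖E‖ * ‖J‖ * ‖A‖ + ‖E‖ * ‖J‖ * ‖E‖ := by
        gcongr <;> exact l2_opNorm_transpose_mul_mul_le _ _ _
    _ = ‖J‖ * (2 * ‖A‖ * ‖E‖ + ‖E‖ ^ 2) := by ring

end Matrix

lemma symplJ_mem_orthogonalGroup (n : ℕ) : symplJ n ∈ orthogonalGroup (Fin n ⊕ Fin n) ℝ := by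
  rw [mem_orthogonalGroup_iff]
  simp [symplJ, fromBlocks_transpose, fromBlocks_multiply, fromBlocks_one]

lemma norm_symplJ_le (n : ℕ) : ‖symplJ n‖ ≤ 1 := by
  rcases isEmpty_or_nonempty (Fin n)
  · simp [Subsingleton.elim (symplJ n) 0]
  · exact (CStarRing.norm_of_mem_unitary (symplJ_mem_orthogonalGroup n)).le

lemma norm_le_norm_add_div_one_sub {G : Type*} [SeminormedAddCommGroup G] {a e : G} {ε : ℝ}
    (hε : ε < 1) (he : ‖e‖ ≤ ε * ‖a‖) : ‖a‖ ≤ ‖a + e‖ / (1 - ε) := by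
  rw [le_div_iff₀ (sub_pos.2 hε)]
  have := norm_sub_le (a + e) e
  rw [add_sub_cancel_right] at this
  linarith

/-- If `A` is symplectic and `‖E‖₂ ≤ ε ‖A‖₂` with `0 < ε < 1`, then for `Â = A + E` we
have `Δ(Â) = ‖Âᵀ J Â − J‖₂ ≤ ‖Â‖₂² (2ε + ε²)/(1 − ε)²`. -/
theorem loss_of_symplecticity_relative_perturbation_bound (n : ℕ)
    (A E : Matrix (Fin n ⊕ Fin n) (Fin n ⊕ Fin n) ℝ)
    (hsympl : Aᵀ * symplJ n * A = symplJ n)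
    (ε : ℝ) (hε0 : 0 < ε) (hε1 : ε < 1)
    (hE : ‖E‖ ≤ ε * ‖A‖) :
    ‖(A + E)ᵀ * symplJ n * (A + E) - symplJ n‖ ≤
      ‖A + E‖ ^ 2 * (2 * ε + ε ^ 2) / (1 - ε) ^ 2 := by
  have hA : ‖A‖ ≤ ‖A + E‖ / (1 - ε) := norm_le_norm_add_div_one_sub hε1 hE
  calc _ ≤ ‖symplJ n‖ * (2 * ‖A‖ * ‖E‖ + ‖E‖ ^ 2) :=
        l2_opNorm_transpose_mul_mul_add_sub_le hsympl E
    _ ≤ 1 * ((2 * ε + ε ^ 2) * ‖A‖ ^ 2) := by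
        gcongr
        · exact norm_symplJ_le n
        · nlinarith [norm_nonneg A, norm_nonneg E]
    _ ≤ (2 * ε + ε ^ 2) * (‖A + E‖ / (1 - ε)) ^ 2 := by rw [one_mul]; gcongr
    _ = ‖A + E‖ ^ 2 * (2 * ε + ε ^ 2) / (1 - ε) ^ 2 := by rw [div_pow]; ring
end
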